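/- Let X be a compact metric space, let f : X → X be a homeomorphism, and let 𝒜 be the cocycle generated by an α-Hölder function A : X → GL(m,ℝ). Suppose there exist ε > 0 and c_ε > 0 such that ‖𝒜(x,n)‖ ≤ c_ε·e^{εn} and ‖𝒜(x,n)^{−1}‖ ≤ c_ε·e^{εn} for all x ∈ X and n ∈ ℕ. Then for any λ > 2ε/α there exists a constant c > 0 (depending only on A, c_ε, and αλ − 2ε) such that for any δ > 0, any n ∈ ℕ, and any points x, y ∈ X with dist(f^i x, f^i y) ≤ δ·e^{−λ(n−i)} for all i = 0, …, n, one has ‖𝒜(x,n)·𝒜(y,n)^{−1} − Id‖ ≤ c·δ^α. -/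

import Mathlib

/-! Telescope `𝒜(x,n)𝒜(y,n)⁻¹ - Id` through `Tᵢ = 𝒜(fⁱx, n-i)𝒜(fⁱy, n-i)⁻¹`, which runs from
`T₀ = 𝒜(x,n)𝒜(y,n)⁻¹` to `Tₙ = Id`. Each difference `Tᵢ - Tᵢ₊₁` equals
`𝒜(fⁱ⁺¹x, n-i-1) (A(fⁱx) - A(fⁱy)) 𝒜(fⁱy, n-i)⁻¹`, whose norm the growth bound and Hölder
continuity control by `c_ε² C δ^α e^{-(αλ-2ε)(n-i)}`. Since `αλ > 2ε` these terms form a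
convergent geometric series, and the sum is `O(δ^α)`. -/

noncomputable section

/-- The ℓ² operator norm of a square real matrix. -/
def opNorm {m : ℕ} (M : Matrix (Fin m) (Fin m) ℝ) : ℝ :=
  ‖Matrix.toEuclideanCLM (𝕜 := ℝ) M‖

/-- The metric `d_G(A,B) = ‖A − B‖ + ‖A⁻¹ − B⁻¹‖` on `GL(m,ℝ)`. -/
def dG {m : ℕ} (A B : GL (Fin m) ℝ) : ℝ :=
  opNorm ((A : Matrix (Fin m) (Fin m) ℝ) - (B : Matrix (Fin m) (Fin m) ℝ)) +
    opNorm (((A⁻¹ : GL (Fin m) ℝ) : Matrix (Fin m) (Fin m) ℝ) -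
      ((B⁻¹ : GL (Fin m) ℝ) : Matrix (Fin m) (Fin m) ℝ))

/-- The cocycle generated by `A` over `f`: `coc f A x n = A(f^{n-1}x) ⋯ A(fx) A(x)`. -/
def coc {X : Type*} {m : ℕ} (f : X → X) (A : X → GL (Fin m) ℝ) (x : X) : ℕ → GL (Fin m) ℝ
  | 0 => 1
  | n + 1 => A (f^[n] x) * coc f A x n

/-- Extension of the cocycle to `ℤ`: `cocZ f A x (−n) = (coc f A (f^{−n} x) n)⁻¹`. -/
def cocZ {X : Type*} [TopologicalSpace X] {m : ℕ} (f : X ≃ₜ X) (A : X → GL (Fin m) ℝ)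
    (x : X) : ℤ → GL (Fin m) ℝ
  | (n : ℕ) => coc (⇑f) A x n
  | Int.negSucc n => (coc (⇑f) A ((⇑f.symm)^[n + 1] x) (n + 1))⁻¹

/-- The `k`-th iterate (`k ∈ ℤ`) of a homeomorphism. -/
def iterZ {X : Type*} [TopologicalSpace X] (f : X ≃ₜ X) : ℤ → X → X
  | (n : ℕ) => (⇑f)^[n]
  | Int.negSucc n => (⇑f.symm)^[n + 1]

/-- `A` is α-Hölder continuous (with respect to the operator norm on matrices). -/
def IsHolder {X : Type*} [MetricSpace X] {m : ℕ} (A : X → GL (Fin m) ℝ) (α : ℝ) : Prop :=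
  ∃ C : ℝ, ∀ x y : X,
    opNorm ((A x : Matrix (Fin m) (Fin m) ℝ) - (A y : Matrix (Fin m) (Fin m) ℝ))
      ≤ C * dist x y ^ α

/-- The closing property with constants `c, lam, δ₀`: for any `x` and `n > 0` with
`dist(x, fⁿx) < δ₀` there are `p, y` with `fⁿp = p` such that, with `δ = c·dist(x, fⁿx)`,
for every `i = 0, …, n`: `dist(fⁱx, fⁱp) ≤ δ·exp(−λ·min{i,n−i})`,
`dist(fⁱp, fⁱy) ≤ δ·exp(−λi)` and `dist(fⁱy, fⁱx) ≤ δ·exp(−λ(n−i))`. -/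
def ClosingAt {X : Type*} [MetricSpace X] (f : X ≃ₜ X) (c lam δ₀ : ℝ) : Prop :=
  ∀ x : X, ∀ n : ℕ, 0 < n → dist x ((⇑f)^[n] x) < δ₀ →
    ∃ p y : X, (⇑f)^[n] p = p ∧ ∀ i ≤ n,
      dist ((⇑f)^[i] x) ((⇑f)^[i] p)
          ≤ c * dist x ((⇑f)^[n] x) * Real.exp (-(lam * (min i (n - i) : ℕ))) ∧
      dist ((⇑f)^[i] p) ((⇑f)^[i] y)
          ≤ c * dist x ((⇑f)^[n] x) * Real.exp (-(lam * i)) ∧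
      dist ((⇑f)^[i] y) ((⇑f)^[i] x)
          ≤ c * dist x ((⇑f)^[n] x) * Real.exp (-(lam * ((n - i : ℕ) : ℝ)))

/-- The closing property: `ClosingAt` holds for some positive constants. -/
def ClosingProperty {X : Type*} [MetricSpace X] (f : X ≃ₜ X) : Prop :=
  ∃ c lam δ₀ : ℝ, 0 < c ∧ 0 < lam ∧ 0 < δ₀ ∧ ClosingAt f c lam δ₀

/-- Topological transitivity: some point has a dense (two-sided) orbit. -/
def TopTransitive {X : Type*} [TopologicalSpace X] (f : X ≃ₜ X) : Prop :=
  ∃ z : X, Dense (Set.range fun k : ℤ => iterZ f k z)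

/-- `ρ ∈ ℂ` is an eigenvalue of the real matrix `M` (a root of its characteristic
polynomial over `ℂ`). -/
def IsEigen {m : ℕ} (M : Matrix (Fin m) (Fin m) ℝ) (ρ : ℂ) : Prop :=
  ((M.map Complex.ofReal).charpoly).IsRoot ρ

/-- The maximum of `|ρ|` over the complex eigenvalues `ρ` of `M` (the spectral radius). -/
def maxAbsEigen {m : ℕ} (M : Matrix (Fin m) (Fin m) ℝ) : ℝ :=
  sSup {r : ℝ | ∃ ρ : ℂ, IsEigen M ρ ∧ r = ‖ρ‖}

/-- The minimum of `|ρ|` over the complex eigenvalues `ρ` of `M`. -/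
def minAbsEigen {m : ℕ} (M : Matrix (Fin m) (Fin m) ℝ) : ℝ :=
  sInf {r : ℝ | ∃ ρ : ℂ, IsEigen M ρ ∧ r = ‖ρ‖}

/-- The β-closing property with constants `c, lam, δ₀`, i.e. the closing property with
`δ = c · dist(x, fⁿx)^β` in place of `δ = c · dist(x, fⁿx)`. -/
def ClosingAtβ {X : Type*} [MetricSpace X] (f : X ≃ₜ X) (β c lam δ₀ : ℝ) : Prop :=
  ∀ x : X, ∀ n : ℕ, 0 < n → dist x ((⇑f)^[n] x) < δ₀ →
    ∃ p y : X, (⇑f)^[n] p = p ∧ ∀ i ≤ n,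
      dist ((⇑f)^[i] x) ((⇑f)^[i] p)
          ≤ c * dist x ((⇑f)^[n] x) ^ β * Real.exp (-(lam * (min i (n - i) : ℕ))) ∧
      dist ((⇑f)^[i] p) ((⇑f)^[i] y)
          ≤ c * dist x ((⇑f)^[n] x) ^ β * Real.exp (-(lam * i)) ∧
      dist ((⇑f)^[i] y) ((⇑f)^[i] x)
          ≤ c * dist x ((⇑f)^[n] x) ^ β * Real.exp (-(lam * ((n - i : ℕ) : ℝ)))

lemma opNorm_nonneg {m : ℕ} (M : Matrix (Fin m) (Fin m) ℝ) : 0 ≤ opNorm M :=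
  norm_nonneg _

lemma opNorm_mul_le {m : ℕ} (M N : Matrix (Fin m) (Fin m) ℝ) :
    opNorm (M * N) ≤ opNorm M * opNorm N := by
  unfold opNorm
  rw [map_mul]
  exact norm_mul_le _ _

lemma opNorm_sum_le {m : ℕ} {ι : Type*} (s : Finset ι) (M : ι → Matrix (Fin m) (Fin m) ℝ) :
    opNorm (∑ i ∈ s, M i) ≤ ∑ i ∈ s, opNorm (M i) := by
  unfold opNorm
  rw [map_sum]
  exact norm_sum_le _ _

lemma IsHolder.exists_pos {X : Type*} [MetricSpace X] {m : ℕ} {A : X → GL (Fin m) ℝ} {α : ℝ}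
    (hA : IsHolder A α) :
    ∃ C : ℝ, 0 < C ∧ ∀ x y : X,
      opNorm ((A x : Matrix (Fin m) (Fin m) ℝ) - (A y : Matrix (Fin m) (Fin m) ℝ))
        ≤ C * dist x y ^ α := by
  obtain ⟨C, hC⟩ := hA
  refine ⟨max C 1, by positivity, fun x y => (hC x y).trans ?_⟩
  gcongr
  exact le_max_left C 1

lemma sum_range_pow_sub_le {r : ℝ} (hr0 : 0 ≤ r) (hr1 : r < 1) (n : ℕ) :
    ∑ i ∈ Finset.range n, r ^ (n - i) ≤ r / (1 - r) := by
  have hreflect : ∑ i ∈ Finset.range n, r ^ (n - i) = ∑ j ∈ Finset.Ico 1 (n + 1), r ^ j := by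
    rw [Finset.sum_Ico_eq_sum_range, ← Finset.sum_range_reflect, Nat.add_sub_cancel]
    refine Finset.sum_congr rfl fun i hi => ?_
    rw [Finset.mem_range] at hi
    congr 1
    omega
  simpa [hreflect] using geom_sum_Ico_le_of_lt_one (m := 1) (n := n + 1) hr0 hr1

section Cocycle

variable {X : Type*} {m : ℕ} (f : X → X) (A : X → GL (Fin m) ℝ)

lemma coc_succ_eq_coc_mul (x : X) (k : ℕ) : coc f A x (k + 1) = coc f A (f x) k * A x := by
  induction k with
  | zero => simp [coc]
  | succ k ih =>
    rw [coc, ih, coc, ← mul_assoc, Function.iterate_succ_apply]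

lemma coc_mul_inv_succ_sub (x y : X) (k : ℕ) :
    ((coc f A x (k + 1) * (coc f A y (k + 1))⁻¹ : GL (Fin m) ℝ) : Matrix (Fin m) (Fin m) ℝ) -
        ((coc f A (f x) k * (coc f A (f y) k)⁻¹ : GL (Fin m) ℝ) : Matrix (Fin m) (Fin m) ℝ) =
      (coc f A (f x) k : Matrix (Fin m) (Fin m) ℝ) *
        ((A x : Matrix (Fin m) (Fin m) ℝ) - (A y : Matrix (Fin m) (Fin m) ℝ)) *
        (((coc f A y (k + 1))⁻¹ : GL (Fin m) ℝ) : Matrix (Fin m) (Fin m) ℝ) := by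
  have hinsert : coc f A (f x) k * (coc f A (f y) k)⁻¹ =
      coc f A (f x) k * A y * (coc f A y (k + 1))⁻¹ := by
    rw [coc_succ_eq_coc_mul]
    group
  rw [hinsert, coc_succ_eq_coc_mul f A x]
  simp only [Units.val_mul]
  noncomm_ring

lemma coc_mul_inv_sub_one_eq_sum (x y : X) (n : ℕ) :
    ((coc f A x n * (coc f A y n)⁻¹ : GL (Fin m) ℝ) : Matrix (Fin m) (Fin m) ℝ) - 1 =
      ∑ i ∈ Finset.range n,
        (coc f A (f^[i + 1] x) (n - (i + 1)) : Matrix (Fin m) (Fin m) ℝ) *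
          ((A (f^[i] x) : Matrix (Fin m) (Fin m) ℝ) - (A (f^[i] y) : Matrix (Fin m) (Fin m) ℝ)) *
          (((coc f A (f^[i] y) (n - i))⁻¹ : GL (Fin m) ℝ) : Matrix (Fin m) (Fin m) ℝ) := by
  set T : ℕ → Matrix (Fin m) (Fin m) ℝ := fun i =>
    ((coc f A (f^[i] x) (n - i) * (coc f A (f^[i] y) (n - i))⁻¹ : GL (Fin m) ℝ) :
      Matrix (Fin m) (Fin m) ℝ)
  have hT : T 0 - T n =
      ((coc f A x n * (coc f A y n)⁻¹ : GL (Fin m) ℝ) : Matrix (Fin m) (Fin m) ℝ) - 1 := by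
    simp [T, coc]
  rw [← hT, ← Finset.sum_range_sub']
  refine Finset.sum_congr rfl fun i hi => ?_
  have hk : n - i = n - (i + 1) + 1 := by rw [Finset.mem_range] at hi; omega
  simp only [T, hk, Function.iterate_succ_apply']
  exact coc_mul_inv_succ_sub f A _ _ _

lemma opNorm_coc_mul_inv_sub_one_le (x y : X) (n : ℕ) :
    opNorm (((coc f A x n * (coc f A y n)⁻¹ : GL (Fin m) ℝ) : Matrix (Fin m) (Fin m) ℝ) - 1) ≤
      ∑ i ∈ Finset.range n,
        opNorm (coc f A (f^[i + 1] x) (n - (i + 1)) : Matrix (Fin m) (Fin m) ℝ) *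
          opNorm ((A (f^[i] x) : Matrix (Fin m) (Fin m) ℝ) -
            (A (f^[i] y) : Matrix (Fin m) (Fin m) ℝ)) *
          opNorm (((coc f A (f^[i] y) (n - i))⁻¹ : GL (Fin m) ℝ) : Matrix (Fin m) (Fin m) ℝ) := by
  rw [coc_mul_inv_sub_one_eq_sum]
  refine (opNorm_sum_le _ _).trans (Finset.sum_le_sum fun i _ => ?_)
  refine (opNorm_mul_le _ _).trans ?_
  gcongr
  · exact opNorm_nonneg _
  · exact opNorm_mul_le _ _

end Cocycle

lemma opNorm_sub_le_of_dist_le {X : Type*} [MetricSpace X] {m : ℕ} {A : X → GL (Fin m) ℝ}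
    {α C δ t : ℝ} (hα : 0 ≤ α) (hC : 0 ≤ C) (hδ : 0 ≤ δ)
    (hA : ∀ x y : X,
      opNorm ((A x : Matrix (Fin m) (Fin m) ℝ) - (A y : Matrix (Fin m) (Fin m) ℝ))
        ≤ C * dist x y ^ α)
    {x y : X} (hxy : dist x y ≤ δ * Real.exp (-t)) :
    opNorm ((A x : Matrix (Fin m) (Fin m) ℝ) - (A y : Matrix (Fin m) (Fin m) ℝ))
      ≤ C * δ ^ α * Real.exp (-(α * t)) := by
  calc _ ≤ C * dist x y ^ α := hA x y
    _ ≤ C * (δ * Real.exp (-t)) ^ α := by gcongr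
    _ = C * δ ^ α * Real.exp (-(α * t)) := by
      rw [Real.mul_rpow hδ (Real.exp_nonneg _), ← Real.exp_mul, mul_assoc, neg_mul, mul_comm t]

lemma opNorm_coc_mul_opNorm_sub_mul_opNorm_coc_inv_le {X : Type*} [MetricSpace X] {m : ℕ}
    (f : X → X) (A : X → GL (Fin m) ℝ) {α ε cε C δ lam : ℝ} (hα : 0 ≤ α) (hε : 0 ≤ ε)
    (hcε : 0 ≤ cε) (hC : 0 ≤ C) (hδ : 0 ≤ δ)
    (hA : ∀ x y : X,
      opNorm ((A x : Matrix (Fin m) (Fin m) ℝ) - (A y : Matrix (Fin m) (Fin m) ℝ))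
        ≤ C * dist x y ^ α)
    (hgrow : ∀ (x : X) (n : ℕ),
      opNorm ((coc f A x n : GL (Fin m) ℝ) : Matrix (Fin m) (Fin m) ℝ)
          ≤ cε * Real.exp (ε * n) ∧
      opNorm (((coc f A x n)⁻¹ : GL (Fin m) ℝ) : Matrix (Fin m) (Fin m) ℝ)
          ≤ cε * Real.exp (ε * n))
    {x y : X} {n i : ℕ}
    (hxy : dist (f^[i] x) (f^[i] y) ≤ δ * Real.exp (-(lam * ((n - i : ℕ) : ℝ)))) :
    opNorm (coc f A (f^[i + 1] x) (n - (i + 1)) : Matrix (Fin m) (Fin m) ℝ) *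
        opNorm ((A (f^[i] x) : Matrix (Fin m) (Fin m) ℝ) -
          (A (f^[i] y) : Matrix (Fin m) (Fin m) ℝ)) *
        opNorm (((coc f A (f^[i] y) (n - i))⁻¹ : GL (Fin m) ℝ) : Matrix (Fin m) (Fin m) ℝ)
      ≤ cε * cε * C * δ ^ α * Real.exp (-(α * lam - 2 * ε)) ^ (n - i) := by
  have hforward : opNorm (coc f A (f^[i + 1] x) (n - (i + 1)) : Matrix (Fin m) (Fin m) ℝ)
      ≤ cε * Real.exp (ε * (n - i : ℕ)) :=
    (hgrow _ _).1.trans (by gcongr; omega)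
  have hholder := opNorm_sub_le_of_dist_le hα hC hδ hA hxy
  calc _ ≤ cε * Real.exp (ε * (n - i : ℕ)) *
          (C * δ ^ α * Real.exp (-(α * (lam * (n - i : ℕ))))) * (cε * Real.exp (ε * (n - i : ℕ))) :=
        mul_le_mul (mul_le_mul hforward hholder (opNorm_nonneg _) (by positivity))
          (hgrow _ _).2 (opNorm_nonneg _) (by positivity)
    _ = cε * cε * C * δ ^ α *
          (Real.exp (ε * (n - i : ℕ)) * Real.exp (ε * (n - i : ℕ)) *
            Real.exp (-(α * (lam * (n - i : ℕ))))) := by ring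
    _ = cε * cε * C * δ ^ α * Real.exp (-(α * lam - 2 * ε)) ^ (n - i) := by
      rw [← Real.exp_add, ← Real.exp_add, ← Real.exp_nat_mul]
      congr 2
      ring

theorem close_orbits_backward_general {X : Type*} [MetricSpace X] (f : X ≃ₜ X)
    {m : ℕ} (α : ℝ) (hα : 0 < α) (A : X → GL (Fin m) ℝ) (hH : IsHolder A α)
    (ε cε : ℝ) (hε : 0 < ε) (hcε : 0 < cε)
    (hgrow : ∀ (x : X) (n : ℕ),
      opNorm ((coc (⇑f) A x n : GL (Fin m) ℝ) : Matrix (Fin m) (Fin m) ℝ)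
          ≤ cε * Real.exp (ε * n) ∧
      opNorm (((coc (⇑f) A x n)⁻¹ : GL (Fin m) ℝ) : Matrix (Fin m) (Fin m) ℝ)
          ≤ cε * Real.exp (ε * n))
    (lam : ℝ) (hlam : 2 * ε / α < lam) :
    ∃ c : ℝ, 0 < c ∧ ∀ δ : ℝ, 0 < δ → ∀ (n : ℕ) (x y : X),
      (∀ i ≤ n, dist ((⇑f)^[i] x) ((⇑f)^[i] y) ≤ δ * Real.exp (-(lam * ((n - i : ℕ) : ℝ)))) →
      opNorm (((coc (⇑f) A x n * (coc (⇑f) A y n)⁻¹ : GL (Fin m) ℝ) :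
        Matrix (Fin m) (Fin m) ℝ) - 1) ≤ c * δ ^ α := by
  obtain ⟨C, hC, hA⟩ := hH.exists_pos
  set r := Real.exp (-(α * lam - 2 * ε))
  have hr1 : r < 1 := by
    have := (div_lt_iff₀ hα).mp hlam
    rw [Real.exp_lt_one_iff]
    linarith
  have hr0 : 0 < r := Real.exp_pos _
  refine ⟨cε * cε * C * (r / (1 - r)), by have := sub_pos.mpr hr1; positivity, ?_⟩
  intro δ hδ n x y hxy
  calc _ ≤ _ := opNorm_coc_mul_inv_sub_one_le (⇑f) A x y n
    _ ≤ ∑ i ∈ Finset.range n, cε * cε * C * δ ^ α * r ^ (n - i) :=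
      Finset.sum_le_sum fun i hi =>
        opNorm_coc_mul_opNorm_sub_mul_opNorm_coc_inv_le (⇑f) A hα.le hε.le hcε.le hC.le hδ.le
          hA hgrow (hxy i (Finset.mem_range.mp hi).le)
    _ ≤ cε * cε * C * δ ^ α * (r / (1 - r)) := by
      rw [← Finset.mul_sum]
      gcongr
      exact sum_range_pow_sub_le hr0.le hr1 n
    _ = cε * cε * C * (r / (1 - r)) * δ ^ α := by ring

/-- **Comparison of slowly growing cocycles along exponentially converging orbit
segments (backward version).** If `‖𝒜(x,n)‖, ‖𝒜(x,n)⁻¹‖ ≤ c_ε·e^{εn}` and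
`λ > 2ε/α`, then `dist(fⁱx, fⁱy) ≤ δ·e^{−λ(n−i)}` for `i = 0,…,n` implies
`‖𝒜(x,n)·𝒜(y,n)⁻¹ − Id‖ ≤ c·δ^α`. -/
theorem close_orbits_backward {X : Type*} [MetricSpace X] [CompactSpace X] (f : X ≃ₜ X)
    {m : ℕ} (α : ℝ) (hα : 0 < α) (A : X → GL (Fin m) ℝ) (hH : IsHolder A α)
    (ε cε : ℝ) (hε : 0 < ε) (hcε : 0 < cε)
    (hgrow : ∀ (x : X) (n : ℕ),
      opNorm ((coc (⇑f) A x n : GL (Fin m) ℝ) : Matrix (Fin m) (Fin m) ℝ)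
          ≤ cε * Real.exp (ε * n) ∧
      opNorm (((coc (⇑f) A x n)⁻¹ : GL (Fin m) ℝ) : Matrix (Fin m) (Fin m) ℝ)
          ≤ cε * Real.exp (ε * n))
    (lam : ℝ) (hlam : 2 * ε / α < lam) :
    ∃ c : ℝ, 0 < c ∧ ∀ δ : ℝ, 0 < δ → ∀ (n : ℕ) (x y : X),
      (∀ i ≤ n, dist ((⇑f)^[i] x) ((⇑f)^[i] y) ≤ δ * Real.exp (-(lam * ((n - i : ℕ) : ℝ)))) →
      opNorm (((coc (⇑f) A x n * (coc (⇑f) A y n)⁻¹ : GL (Fin m) ℝ) :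
        Matrix (Fin m) (Fin m) ℝ) - 1) ≤ c * δ ^ α :=
  close_orbits_backward_general f α hα A hH ε cε hε hcε hgrow lam hlam
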